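/- A sequence (x_1,…,x_m) of vectors in ℝ^n is called almost orthogonal if it is linearly independent and dist(x_j, span(x_1,…,x_{j−1})) ≥ 1 − 1/2^{j−1} for 2 ≤ j ≤ m. If (x_1,…,x_m) is an almost orthogonal primitive m-tuple of points of ℤ^n spanning a subspace U, then e^{−2} ‖x_1‖⋯‖x_m‖ ≤ H(U) ≤ ‖x_1‖⋯‖x_m‖. -/

import Mathlib

open scoped RealInnerProductSpace
open Finset

noncomputable section

/-- A vector of `ℝⁿ` has integer coordinates (i.e. lies in `ℤⁿ`). -/
def IsIntVec {n : ℕ} (x : EuclideanSpace ℝ (Fin n)) : Prop := ∀ j, ∃ m : ℤ, x j = m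

/-- The distance `dist(x,V) = ‖proj_{V^⊥} x‖ / ‖x‖`. -/
def distToSub {n : ℕ} (x : EuclideanSpace ℝ (Fin n))
    (V : Submodule ℝ (EuclideanSpace ℝ (Fin n))) : ℝ :=
  ‖(Submodule.orthogonalProjection Vᗮ x : EuclideanSpace ℝ (Fin n))‖ / ‖x‖

/-- A sequence `(x₁,…,x_m)` is almost orthogonal if it is linearly independent
and `dist(x_j, span(x₁,…,x_{j−1})) ≥ 1 − 1/2^{j−1}` for `2 ≤ j ≤ m`. -/
def AlmostOrthogonal {n m : ℕ} (x : Fin m → EuclideanSpace ℝ (Fin n)) : Prop :=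
  LinearIndependent ℝ x ∧
  ∀ j : Fin m, 1 ≤ (j : ℕ) →
    1 - 1 / 2 ^ (j : ℕ) ≤ distToSub (x j) (Submodule.span ℝ (x '' {i | i < j}))

/-- The norm `‖v₁ ∧ ⋯ ∧ v_m‖` of a wedge product (square root of the Gram
determinant); for a basis of `U ∩ ℤⁿ` this is the height `H(U)`. -/
def gramNorm {n : ℕ} {ι : Type*} [Fintype ι] [DecidableEq ι]
    (v : ι → EuclideanSpace ℝ (Fin n)) : ℝ :=
  Real.sqrt (Matrix.det (Matrix.of fun i j => (⟪v i, v j⟫ : ℝ)))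

open InnerProductSpace

/-- The Gram determinant is the product of the squared norms of the
Gram–Schmidt orthogonalization. -/
lemma gram_det_eq_prod {n m : ℕ} [WellFoundedLT (Fin m)]
    (x : Fin m → EuclideanSpace ℝ (Fin n)) :
    Matrix.det (Matrix.of fun i j => (⟪x i, x j⟫ : ℝ))
      = ∏ i : Fin m, ‖gramSchmidt ℝ x i‖ ^ 2 := by
  set g := gramSchmidt ℝ x with hg
  set C : Matrix (Fin m) (Fin m) ℝ :=
    Matrix.of fun i j => if j = i then (1:ℝ) else if j < i then ⟪g j, x i⟫ / ‖g j‖ ^ 2 else 0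
    with hC
  have hx : ∀ i, x i = ∑ j, C i j • g j := by
    intro i
    have h : ∀ j : Fin m, C i j • g j
        = (if j = i then g i else 0)
          + (if j ∈ Iio i then (⟪g j, x i⟫ / ‖g j‖ ^ 2) • g j else 0) := by
      intro j
      rcases lt_trichotomy j i with h | h | h
      · simp [hC, h.ne, h, mem_Iio]
      · simp [hC, h, lt_irrefl]
      · simp [hC, h.ne', not_lt_of_gt h, mem_Iio]
    simp only [h, Finset.sum_add_distrib, Finset.sum_ite_eq', Finset.mem_univ, if_true,
      Finset.sum_ite_mem, Finset.univ_inter]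
    simpa using gramSchmidt_def'' ℝ x i
  have hG : (Matrix.of fun i j => (⟪g i, g j⟫ : ℝ)) = Matrix.diagonal fun i => ‖g i‖ ^ 2 := by
    ext i j
    by_cases h : i = j
    · subst h
      simp only [Matrix.of_apply, Matrix.diagonal_apply_eq]
      exact real_inner_self_eq_norm_sq _
    · simp only [Matrix.of_apply, Matrix.diagonal_apply_ne _ h]
      exact gramSchmidt_orthogonal ℝ x h
  have hfac : (Matrix.of fun i j => (⟪x i, x j⟫ : ℝ))
      = C * (Matrix.of fun i j => (⟪g i, g j⟫ : ℝ)) * C.transpose := by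
    ext i k
    rw [Matrix.mul_assoc]
    simp only [Matrix.mul_apply, Matrix.transpose_apply, Matrix.of_apply, Finset.mul_sum]
    conv_lhs => rw [hx i, hx k]
    rw [sum_inner]
    refine Finset.sum_congr rfl fun j _ => ?_
    rw [inner_sum]
    refine Finset.sum_congr rfl fun l _ => ?_
    rw [real_inner_smul_left, real_inner_smul_right]
    ring
  have hCdet : C.det = 1 := by
    have hbt : C.BlockTriangular OrderDual.toDual := by
      intro i j h
      simp only [OrderDual.toDual_lt_toDual] at h
      simp [hC, h.ne', not_lt_of_gt h]
    rw [Matrix.det_of_lowerTriangular C hbt]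
    simp [hC]
  rw [hfac, Matrix.det_mul, Matrix.det_mul, Matrix.det_transpose, hCdet, hG,
    Matrix.det_diagonal]
  ring

/-- `exp (-2t) ≤ 1 - t` for `0 ≤ t ≤ 1/2`. -/
lemma exp_neg_two_mul_le {t : ℝ} (h0 : 0 ≤ t) (h1 : t ≤ 1 / 2) :
    Real.exp (-(2 * t)) ≤ 1 - t := by
  have h2 : 1 + 2 * t ≤ Real.exp (2 * t) := by
    have := Real.add_one_le_exp (2 * t); linarith
  have hp : (0:ℝ) < 1 + 2 * t := by linarith
  have hep : (0:ℝ) < Real.exp (2 * t) := Real.exp_pos _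
  rw [Real.exp_neg]
  have h3 : (Real.exp (2 * t))⁻¹ ≤ (1 + 2 * t)⁻¹ := by
    exact inv_anti₀ hp h2
  have h4 : (1 + 2 * t)⁻¹ ≤ 1 - t := by
    rw [inv_le_iff_one_le_mul₀ hp]
    nlinarith
  linarith

/-- The geometric-type sum bound. -/
lemma sum_aux (m : ℕ) :
    ∑ j ∈ Finset.range m, (if j = 0 then (0:ℝ) else (1/2) ^ j) ≤ 1 := by
  rcases Nat.eq_zero_or_pos m with rfl | hm
  · simp
  · have key : ∀ k : ℕ, 1 ≤ k →
        ∑ j ∈ Finset.range k, (if j = 0 then (0:ℝ) else (1/2) ^ j) = 1 - 2 * (1/2) ^ k := by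
      intro k hk
      induction k, hk using Nat.le_induction with
      | base => norm_num
      | succ k hk ih =>
        rw [Finset.sum_range_succ, ih, if_neg (by omega)]
        ring
    rw [key m hm]
    have : (0:ℝ) ≤ 2 * (1/2) ^ m := by positivity
    linarith

/-- If `(x₁,…,x_m)` is an almost orthogonal primitive
`m`-tuple of points of `ℤⁿ` (i.e. a basis of `U ∩ ℤⁿ` where
`U = span(x₁,…,x_m)`), then `e⁻² ‖x₁‖⋯‖x_m‖ ≤ H(U) ≤ ‖x₁‖⋯‖x_m‖`. -/
theorem stmt10 (n m : ℕ) (hm : 1 ≤ m)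
    (x : Fin m → EuclideanSpace ℝ (Fin n))
    (hint : ∀ i, IsIntVec (x i))
    (hao : AlmostOrthogonal x)
    (hprim : ∀ z : EuclideanSpace ℝ (Fin n),
      z ∈ Submodule.span ℝ (Set.range x) → IsIntVec z →
        z ∈ Submodule.span ℤ (Set.range x)) :
    Real.exp (-2) * ∏ i : Fin m, ‖x i‖ ≤ gramNorm x ∧
    gramNorm x ≤ ∏ i : Fin m, ‖x i‖ := by
  haveI : WellFoundedLT (Fin m) := inferInstance
  set g := gramSchmidt ℝ x with hg
  -- the gram norm is the product of the Gram–Schmidt norms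
  have hnorm : gramNorm x = ∏ i : Fin m, ‖g i‖ := by
    rw [gramNorm, gram_det_eq_prod x, ← hg, Finset.prod_pow]
    exact Real.sqrt_sq (Finset.prod_nonneg fun i _ => norm_nonneg _)
  -- g j is orthogonal to the span of the earlier g's
  have horth : ∀ j : Fin m, g j ∈ (Submodule.span ℝ (g '' Set.Iio j))ᗮ := by
    intro j
    rw [Submodule.mem_orthogonal']
    intro u hu
    induction hu using Submodule.span_induction with
    | mem u hu =>
      obtain ⟨i, hi, rfl⟩ := hu
      exact gramSchmidt_orthogonal ℝ x (ne_of_gt hi)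
    | zero => simp
    | add u v _ _ hu hv => rw [inner_add_right, hu, hv]; ring
    | smul c u _ hu => rw [real_inner_smul_right, hu]; ring
  -- x j − g j lies in the span of the earlier g's
  have hsub : ∀ j : Fin m, x j - g j ∈ Submodule.span ℝ (g '' Set.Iio j) := by
    intro j
    have hdef : x j - g j
        = ∑ i ∈ Iio j, (Submodule.orthogonalProjection (ℝ ∙ g i) (x j) : EuclideanSpace ℝ (Fin n)) := by
      rw [hg, gramSchmidt_def ℝ x j]; simp only [Submodule.starProjection_apply]; abel
    rw [hdef]
    refine Submodule.sum_mem _ fun i hi => ?_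
    have h1 : (ℝ ∙ g i) ≤ Submodule.span ℝ (g '' Set.Iio j) :=
      Submodule.span_mono (Set.singleton_subset_iff.2 ⟨i, Finset.mem_Iio.1 hi, rfl⟩)
    exact h1 (SetLike.coe_mem _)
  -- spans agree
  have hspan : ∀ j : Fin m,
      Submodule.span ℝ (x '' {i | i < j}) = Submodule.span ℝ (g '' Set.Iio j) := by
    intro j
    exact (span_gramSchmidt_Iio ℝ x j).symm
  -- Pythagoras
  have hpyth : ∀ j : Fin m, ‖x j‖ ^ 2 = ‖g j‖ ^ 2 + ‖x j - g j‖ ^ 2 := by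
    intro j
    have hz : ⟪g j, x j - g j⟫ = 0 :=
      (Submodule.mem_orthogonal' _ _).1 (horth j) _ (hsub j)
    set d := x j - g j with hd
    have hxd : x j = g j + d := by rw [hd]; abel
    rw [hxd, norm_add_sq_real, hz]
    ring
  have hle : ∀ j : Fin m, ‖g j‖ ≤ ‖x j‖ := by
    intro j
    have := hpyth j
    nlinarith [norm_nonneg (x j), norm_nonneg (g j), sq_nonneg ‖x j - g j‖]
  -- the orthogonal projection onto the complement is exactly g j
  have hproj : ∀ j : Fin m,
      (Submodule.orthogonalProjection (Submodule.span ℝ (x '' {i | i < j}))ᗮ (x j)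
        : EuclideanSpace ℝ (Fin n)) = g j := by
    intro j
    rw [← Submodule.starProjection_apply]
    apply Submodule.eq_starProjection_of_mem_orthogonal
    · rw [hspan j]; exact horth j
    · rw [Submodule.orthogonal_orthogonal, hspan j]
      exact hsub j
  -- positivity of the norms
  have hxpos : ∀ j : Fin m, 0 < ‖x j‖ := by
    intro j
    exact norm_pos_iff.2 (hao.1.ne_zero j)
  -- lower bound on the Gram–Schmidt norms
  have hlow : ∀ j : Fin m, 1 ≤ (j : ℕ) → (1 - (1/2) ^ (j:ℕ)) * ‖x j‖ ≤ ‖g j‖ := by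
    intro j hj
    have h := hao.2 j hj
    rw [distToSub, hproj j] at h
    rw [div_pow, one_pow] at *
    calc (1 - 1 / 2 ^ (j:ℕ)) * ‖x j‖ ≤ (‖g j‖ / ‖x j‖) * ‖x j‖ := by
          exact mul_le_mul_of_nonneg_right h (hxpos j).le
      _ = ‖g j‖ := div_mul_cancel₀ _ (hxpos j).ne'
  -- at j = 0 we have equality
  have h0 : ∀ j : Fin m, (j : ℕ) = 0 → g j = x j := by
    intro j hj
    have hIio : (Iio j : Finset (Fin m)) = ∅ := by
      ext k
      simp only [Finset.mem_Iio, Finset.notMem_empty, iff_false, not_lt, Fin.le_def, hj]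
      omega
    rw [hg, gramSchmidt_def ℝ x j, hIio]
    simp
  constructor
  · -- lower bound
    set b : Fin m → ℝ := fun j => if (j:ℕ) = 0 then 1 else 1 - (1/2) ^ (j:ℕ) with hb
    have hbnn : ∀ j, 0 ≤ b j := by
      intro j
      rw [hb]
      by_cases h : (j:ℕ) = 0
      · simp [h]
      · simp only [h, if_false]
        have : ((1:ℝ)/2) ^ (j:ℕ) ≤ 1 := pow_le_one₀ (by norm_num) (by norm_num)
        linarith
    have hstep : ∀ j : Fin m, b j * ‖x j‖ ≤ ‖g j‖ := by
      intro j
      by_cases h : (j:ℕ) = 0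
      · simp [hb, h, h0 j h]
      · have : 1 ≤ (j:ℕ) := Nat.one_le_iff_ne_zero.2 h
        rw [hb]; simp only [h, if_false]
        exact hlow j this
    have hprod1 : (∏ j : Fin m, b j) * ∏ j : Fin m, ‖x j‖ ≤ ∏ j : Fin m, ‖g j‖ := by
      rw [← Finset.prod_mul_distrib]
      exact Finset.prod_le_prod (fun j _ => mul_nonneg (hbnn j) (norm_nonneg _))
        (fun j _ => hstep j)
    have hprod2 : Real.exp (-2) ≤ ∏ j : Fin m, b j := by
      set s : Fin m → ℝ := fun j => if (j:ℕ) = 0 then 0 else (1/2) ^ (j:ℕ) with hs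
      have hcomp : ∀ j : Fin m, Real.exp (-(2 * s j)) ≤ b j := by
        intro j
        by_cases h : (j:ℕ) = 0
        · simp [hs, hb, h]
        · have hj1 : 1 ≤ (j:ℕ) := Nat.one_le_iff_ne_zero.2 h
          have ht0 : (0:ℝ) ≤ (1/2) ^ (j:ℕ) := by positivity
          have ht1 : ((1:ℝ)/2) ^ (j:ℕ) ≤ 1/2 := by
            calc ((1:ℝ)/2) ^ (j:ℕ) ≤ (1/2) ^ 1 :=
              pow_le_pow_of_le_one (by norm_num) (by norm_num) hj1
            _ = 1/2 := by norm_num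
          simp only [hs, hb, h, if_false]
          exact exp_neg_two_mul_le ht0 ht1
      have hsum : ∑ j : Fin m, s j ≤ 1 := by
        rw [hs]
        calc ∑ j : Fin m, (if (j:ℕ) = 0 then (0:ℝ) else (1/2) ^ (j:ℕ))
            = ∑ j ∈ Finset.range m, (if j = 0 then (0:ℝ) else (1/2) ^ j) :=
              Fin.sum_univ_eq_sum_range (fun j => if j = 0 then (0:ℝ) else (1/2) ^ j) m
          _ ≤ 1 := sum_aux m
      calc Real.exp (-2) ≤ Real.exp (-(2 * ∑ j : Fin m, s j)) := by
            apply Real.exp_le_exp.2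
            nlinarith [hsum]
        _ = ∏ j : Fin m, Real.exp (-(2 * s j)) := by
            rw [← Real.exp_sum]
            congr 1
            rw [Finset.mul_sum]
            exact (Finset.sum_neg_distrib _).symm
        _ ≤ ∏ j : Fin m, b j :=
            Finset.prod_le_prod (fun j _ => (Real.exp_pos _).le) (fun j _ => hcomp j)
    rw [hnorm]
    calc Real.exp (-2) * ∏ i : Fin m, ‖x i‖
        ≤ (∏ j : Fin m, b j) * ∏ i : Fin m, ‖x i‖ := by
          apply mul_le_mul_of_nonneg_right hprod2
          exact Finset.prod_nonneg fun i _ => norm_nonneg _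
      _ ≤ ∏ j : Fin m, ‖g j‖ := hprod1
  · -- upper bound
    rw [hnorm]
    exact Finset.prod_le_prod (fun j _ => norm_nonneg _) (fun j _ => hle j)
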